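/- Let U_{n;c} = U_n + c·U_{n−1}. For c ≠ 0 with (n+1)² ≠ (cn)²: disc(U_{n;c}) = 2^{n(n−1)} (2n+1)^n (−c)^n / ((n+1)² − (cn)²) · U_{n;c}(−(nc² + n + 1)/((2n+1)c)). -/

import Mathlib

/-!
At a root `a` of `U_{n;c}`, the identity
`(1 - x²) U_{n;c}' + n (x + c) U_{n;c} = ((2n+1) c x + n c² + n + 1) U_{n-1}`
gives `(1 - a²) U_{n;c}'(a) = (2n+1) c (a - x₀) U_{n-1}(a)`. Taking the product over all
roots, `∏ (1 - a²)` and `∏ (a - x₀)` are values of `U_{n;c}` at `±1` and `x₀`, while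
`∏ U_{n-1}(a)` is a resultant: swapping it to `∏_{U_{n-1}(b) = 0} U_n(b)` and using
`U_{m+1}(b) = -U_{m-1}(b)` at roots `b` of `U_m` shows that it is the sign `(-1)^{n(n-1)/2}`.
-/
open Polynomial Polynomial.Chebyshev

/-- The resultant: `Res f g = lc(f)^(deg g) * ∏_{α root of f} g(α)`. -/
noncomputable def Res (f g : Polynomial ℂ) : ℂ :=
  f.leadingCoeff ^ g.natDegree * (f.roots.map (fun a => g.eval a)).prod

/-- The discriminant of a polynomial. -/
noncomputable def disc (f : Polynomial ℂ) : ℂ :=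
  (-1) ^ (f.natDegree * (f.natDegree - 1) / 2) / f.leadingCoeff * Res f (derivative f)

theorem Multiset.prod_map_neg_apply {α M : Type*} [CommMonoid M] [HasDistribNeg M]
    (s : Multiset α) (f : α → M) :
    (s.map fun a => -f a).prod = (-1) ^ card s * (s.map f).prod := by
  simpa [Multiset.map_map] using (s.map f).prod_map_neg

namespace Polynomial.Splits

variable {K : Type*} [Field K] {f : K[X]}

theorem leadingCoeff_mul_prod_roots_sub (hf : f.Splits) (x : K) :
    f.leadingCoeff * (f.roots.map (· - x)).prod = (-1) ^ f.natDegree * f.eval x := by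
  simp_rw [← neg_sub x]
  rw [Multiset.prod_map_neg_apply, hf.eval_eq_prod_roots, hf.natDegree_eq_card_roots]
  ring

theorem leadingCoeff_sq_mul_prod_roots_one_sub_sq (hf : f.Splits) :
    f.leadingCoeff ^ 2 * (f.roots.map fun a => 1 - a ^ 2).prod =
      (-1) ^ f.natDegree * (f.eval 1 * f.eval (-1)) := by
  have h₁ := hf.leadingCoeff_mul_prod_roots_sub 1
  have hneg := hf.leadingCoeff_mul_prod_roots_sub (-1)
  have hsq : ((-1 : K) ^ f.natDegree) ^ 2 = 1 := by simp [← pow_mul]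
  have hfactor (a : K) : 1 - a ^ 2 = -((a - 1) * (a - -1)) := by ring
  simp_rw [hfactor]
  rw [Multiset.prod_map_neg_apply, Multiset.prod_map_mul, ← hf.natDegree_eq_card_roots]
  linear_combination (-1 : K) ^ f.natDegree * f.leadingCoeff * (f.roots.map (· - -1)).prod * h₁
    + (-1 : K) ^ f.natDegree * (-1) ^ f.natDegree * f.eval 1 * hneg
    + f.eval 1 * f.eval (-1) * (-1) ^ f.natDegree * hsq

end Polynomial.Splits

theorem Res_comm (f g : ℂ[X]) : Res f g = (-1) ^ (f.natDegree * g.natDegree) * Res g f := by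
  simp only [Res, ← resultant_eq_prod_eval _ _ _ le_rfl (IsAlgClosed.splits _)]
  exact resultant_comm ..

namespace Polynomial.Chebyshev

section CommRing

variable (R : Type*) [CommRing R]

-- The paper's `U_{n;c}`.
noncomputable def Uc (n : ℤ) (c : R) : R[X] :=
  U R n + Polynomial.C c * U R (n - 1)

variable {R}

theorem one_sub_X_sq_mul_derivative_U (n : ℤ) :
    (1 - X ^ 2) * derivative (U R n) =
      ((n : R[X]) + 1) * U R (n - 1) - (n : R[X]) * X * U R n := by
  have h₁ := add_one_mul_T_eq_poly_in_U (R := R) n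
  have h₂ := T_eq_U_sub_X_mul_U R (n + 1)
  have h₃ := U_add_one R n
  rw [add_sub_cancel_right] at h₂
  linear_combination h₁ - ((n : R[X]) + 1) * (h₂ + h₃)

theorem one_sub_X_sq_mul_derivative_Uc (n : ℤ) (c : R) :
    (1 - X ^ 2) * derivative (Uc R n c) + (n : R[X]) * (X + Polynomial.C c) * Uc R n c =
      (Polynomial.C ((2 * n + 1) * c) * X + Polynomial.C (n * c ^ 2 + n + 1)) * U R (n - 1) := by
  have h₁ := one_sub_X_sq_mul_derivative_U (R := R) n
  have h₂ := one_sub_X_sq_mul_derivative_U (R := R) (n - 1)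
  have h₃ := U_sub_two R n
  rw [sub_sub, one_add_one_eq_two] at h₂
  push_cast at h₂
  rw [Uc, derivative_add, derivative_C_mul]
  simp only [map_add, map_mul, map_pow, map_intCast, map_one, map_ofNat]
  linear_combination h₁ + Polynomial.C c * h₂ + Polynomial.C c * (n : R[X]) * h₃

theorem eval_one_mul_eval_neg_one_Uc (n : ℤ) (c : R) :
    (Uc R n c).eval 1 * (Uc R n c).eval (-1) = n.negOnePow * ((n + 1) ^ 2 - (c * n) ^ 2) := by
  simp only [Uc, eval_add, eval_mul, eval_C, U_eval_one, U_eval_neg_one, Int.negOnePow_sub,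
    Int.negOnePow_one, Units.val_mul, Units.val_neg, Units.val_one]
  push_cast
  ring

variable [IsDomain R] [NeZero (2 : R)]

theorem degree_C_mul_U_sub_one_lt (n : ℕ) (c : R) :
    (Polynomial.C c * U R ((n : ℤ) - 1)).degree < (U R n).degree := by
  rw [← smul_eq_C_mul, degree_U_natCast]
  refine (degree_smul_le c _).trans_lt ?_
  cases n with
  | zero => simp
  | succ m =>
    rw [Nat.cast_succ, add_sub_cancel_right, degree_U_natCast]
    exact_mod_cast Nat.lt_succ_self m

theorem natDegree_Uc (n : ℕ) (c : R) : (Uc R n c).natDegree = n := by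
  rw [Uc, natDegree_add_eq_left_of_degree_lt (degree_C_mul_U_sub_one_lt n c), natDegree_U_natCast]

theorem leadingCoeff_Uc (n : ℕ) (c : R) : (Uc R n c).leadingCoeff = 2 ^ n := by
  rw [Uc, leadingCoeff_add_of_degree_lt' (degree_C_mul_U_sub_one_lt n c), leadingCoeff_U_natCast]

end CommRing

theorem prod_roots_U_eval_U_add_one (m : ℕ) :
    ((U ℂ m).roots.map (U ℂ (m + 1)).eval).prod = (-1) ^ (m * (m + 1) / 2) := by
  induction m with
  | zero => simp
  | succ m ih =>
    have hswap := Res_comm (U ℂ (m + 1 : ℕ)) (U ℂ m)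
    have hcard : (U ℂ (m + 1 : ℕ)).roots.card = m + 1 := by
      rw [← (IsAlgClosed.splits _).natDegree_eq_card_roots, natDegree_U_natCast]
    simp only [Res, natDegree_U_natCast, leadingCoeff_U_natCast] at hswap
    push_cast at hswap hcard ⊢
    have hroot : ∀ a ∈ (U ℂ (m + 1)).roots,
        (U ℂ (m + 1 + 1)).eval a = -(U ℂ m).eval a := by
      intro a ha
      rw [add_assoc, one_add_one_eq_two, U_add_two, eval_sub, eval_mul,
        (mem_roots'.mp ha).2.eq_zero]
      ring
    have hsign : (-1 : ℂ) ^ ((m + 1) * m) = 1 := (Nat.even_mul_pred_self (m + 1)).neg_one_pow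
    rw [ih, hsign, one_mul, ← pow_mul, ← pow_mul, mul_comm m] at hswap
    rw [Multiset.map_congr rfl hroot, Multiset.prod_map_neg_apply,
      mul_left_cancel₀ (pow_ne_zero _ two_ne_zero) hswap, hcard, ← pow_add,
      show (m + 1) * (m + 1 + 1) = (m + 1) * m + 2 * (m + 1) by ring,
      Nat.add_mul_div_left _ _ two_pos, add_comm]

theorem prod_roots_Uc_eval_U_sub_one (n : ℕ) (c : ℂ) :
    ((Uc ℂ n c).roots.map (U ℂ ((n : ℤ) - 1)).eval).prod = (-1) ^ (n * (n - 1) / 2) := by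
  obtain _ | m := n
  · simp [Uc]
  have hm : ((m + 1 : ℕ) : ℤ) - 1 = m := by push_cast; ring
  have hswap := Res_comm (Uc ℂ (m + 1 : ℕ) c) (U ℂ m)
  have hsign : (-1 : ℂ) ^ ((m + 1) * m) = 1 := (Nat.even_mul_pred_self (m + 1)).neg_one_pow
  have hroot : ∀ b ∈ (U ℂ m).roots,
      (Uc ℂ (m + 1 : ℕ) c).eval b = (U ℂ (m + 1)).eval b := by
    intro b hb
    simp [Uc, (mem_roots'.mp hb).2.eq_zero]
  simp only [Res, natDegree_U_natCast, leadingCoeff_U_natCast, natDegree_Uc, leadingCoeff_Uc,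
    hsign] at hswap
  rw [Multiset.map_congr rfl hroot, prod_roots_U_eval_U_add_one, one_mul, ← pow_mul, ← pow_mul,
    mul_comm m] at hswap
  rw [Nat.add_sub_cancel, hm]
  exact mul_left_cancel₀ (pow_ne_zero _ two_ne_zero) hswap

theorem one_sub_sq_mul_eval_derivative_Uc {K : Type*} [Field K] (n : ℕ) {c : K} (hc : c ≠ 0)
    (h2n : (2 * n + 1 : K) ≠ 0) {a : K} (ha : (Uc K n c).IsRoot a) :
    (1 - a ^ 2) * (derivative (Uc K n c)).eval a =
      (2 * n + 1) * c *
        ((a - -(n * c ^ 2 + n + 1) / ((2 * n + 1) * c)) * (U K ((n : ℤ) - 1)).eval a) := by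
  have h := congr_arg (eval a) (one_sub_X_sq_mul_derivative_Uc (R := K) n c)
  simp only [eval_add, eval_mul, eval_sub, eval_pow, eval_one, eval_X, eval_C, eval_intCast,
    ha.eq_zero, mul_zero, add_zero] at h
  push_cast at h
  rw [h]
  field_simp
  ring

theorem prod_roots_eval_derivative_Uc (n : ℕ) {c : ℂ} (hc : c ≠ 0) :
    (((n : ℂ) + 1) ^ 2 - (c * n) ^ 2) *
        ((Uc ℂ n c).roots.map (derivative (Uc ℂ n c)).eval).prod =
      2 ^ n * (2 * (n : ℂ) + 1) ^ n * (-c) ^ n * (-1) ^ (n * (n - 1) / 2) *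
        (Uc ℂ n c).eval (-((n : ℂ) * c ^ 2 + n + 1) / ((2 * (n : ℂ) + 1) * c)) := by
  have h2n : (2 * (n : ℂ) + 1) ≠ 0 := by exact_mod_cast (by omega : 2 * n + 1 ≠ 0)
  have hsplits := IsAlgClosed.splits (Uc ℂ n c)
  have hprod := congr_arg Multiset.prod <| Multiset.map_congr rfl fun a ha =>
    one_sub_sq_mul_eval_derivative_Uc n hc h2n (mem_roots'.mp ha).2
  simp only [Multiset.prod_map_mul, Multiset.map_const', Multiset.prod_replicate,
    ← hsplits.natDegree_eq_card_roots, prod_roots_Uc_eval_U_sub_one n] at hprod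
  generalize -((n : ℂ) * c ^ 2 + n + 1) / ((2 * (n : ℂ) + 1) * c) = x₀ at hprod ⊢
  have hsq := hsplits.leadingCoeff_sq_mul_prod_roots_one_sub_sq
  have hlin := hsplits.leadingCoeff_mul_prod_roots_sub x₀
  have hends := eval_one_mul_eval_neg_one_Uc (R := ℂ) n c
  simp only [natDegree_Uc, leadingCoeff_Uc, Int.cast_negOnePow_natCast, mul_pow]
    at hprod hsq hlin hends
  push_cast at hends
  have hsign : ((-1 : ℂ) ^ n) ^ 2 = 1 := by simp [← pow_mul]
  set π := ((Uc ℂ n c).roots.map (derivative (Uc ℂ n c)).eval).prod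
  rw [neg_pow]
  linear_combination (2 ^ n) ^ 2 * hprod - π * hsq - (-1) ^ n * π * hends
    + 2 ^ n * (2 * (n : ℂ) + 1) ^ n * c ^ n * (-1) ^ (n * (n - 1) / 2) * hlin
    - ((n + 1) ^ 2 - (c * n) ^ 2) * π * hsign

end Polynomial.Chebyshev

theorem stmt_15_general (n : ℕ) (c : ℂ) (hc : c ≠ 0)
    (hc1 : ((n : ℂ) + 1) ^ 2 ≠ (c * n) ^ 2) :
    disc (U ℂ n + C c * U ℂ ((n : ℤ) - 1)) =
      2 ^ (n * (n - 1)) * (2 * (n : ℂ) + 1) ^ n * (-c) ^ n /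
          (((n : ℂ) + 1) ^ 2 - (c * n) ^ 2) *
        (U ℂ n + C c * U ℂ ((n : ℤ) - 1)).eval
          (-((n : ℂ) * c ^ 2 + n + 1) / ((2 * (n : ℂ) + 1) * c)) := by
  change disc (Uc ℂ n c) = _ * (Uc ℂ n c).eval _
  have hΔ : ((n : ℂ) + 1) ^ 2 - (c * n) ^ 2 ≠ 0 := sub_ne_zero.mpr hc1
  have key := prod_roots_eval_derivative_Uc n hc
  have hsign : ((-1 : ℂ) ^ (n * (n - 1) / 2)) ^ 2 = 1 := by simp [← pow_mul]
  simp only [disc, Res, natDegree_derivative, natDegree_Uc, leadingCoeff_Uc]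
  rw [div_mul_eq_mul_div, div_mul_eq_mul_div, div_eq_div_iff (pow_ne_zero _ two_ne_zero) hΔ,
    ← pow_mul]
  linear_combination (-1 : ℂ) ^ (n * (n - 1) / 2) * 2 ^ (n * (n - 1)) * key
    + 2 ^ (n * (n - 1)) * (2 * (n : ℂ) + 1) ^ n * (-c) ^ n * 2 ^ n *
      (Uc ℂ n c).eval (-((n : ℂ) * c ^ 2 + n + 1) / ((2 * (n : ℂ) + 1) * c)) * hsign

theorem stmt_15 (n : ℕ) (hn : 2 ≤ n) (c : ℂ) (hc : c ≠ 0)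
    (hc1 : ((n : ℂ) + 1) ^ 2 ≠ (c * n) ^ 2) :
    disc (U ℂ n + C c * U ℂ ((n : ℤ) - 1)) =
      2 ^ (n * (n - 1)) * (2 * (n : ℂ) + 1) ^ n * (-c) ^ n /
          (((n : ℂ) + 1) ^ 2 - (c * n) ^ 2) *
        (U ℂ n + C c * U ℂ ((n : ℤ) - 1)).eval
          (-((n : ℂ) * c ^ 2 + n + 1) / ((2 * (n : ℂ) + 1) * c)) :=
  stmt_15_general n c hc hc1
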